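/- Let P = (p, 1−p) and β = (b, 1−b) be probability vectors on a two-point space with p, b ∈ (0,1). The stationarity equations x = log(p/b) − log((1−p)/(1−b)) and y = (1−p)/(1−b) − p/b, for x, y ≠ 0, are solved by p = eˣ·(y + eˣ − 1)/(eˣ − 1)² and b = 1/(1 − eˣ) − 1/y. -/
import Mathlib


open Real

theorem stationarity_solution (p b x y : ℝ)
    (hp : p ∈ Set.Ioo (0:ℝ) 1) (hb : b ∈ Set.Ioo (0:ℝ) 1)
    (hx : x ≠ 0) (hy : y ≠ 0)
    (h1 : x = Real.log (p / b) - Real.log ((1 - p) / (1 - b)))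
    (h2 : y = (1 - p) / (1 - b) - p / b) :
    p = Real.exp x * (y + Real.exp x - 1) / (Real.exp x - 1)^2 ∧
    b = 1 / (1 - Real.exp x) - 1 / y := by
  obtain ⟨hp0, hp1⟩ := hp
  obtain ⟨hb0, hb1⟩ := hb
  have hb0' : b ≠ 0 := ne_of_gt hb0
  have hb1' : (1:ℝ) - b ≠ 0 := by linarith
  have hp1' : (1:ℝ) - p ≠ 0 := by linarith
  have hp0' : p ≠ 0 := ne_of_gt hp0
  have hpos1 : 0 < p / b := div_pos hp0 hb0
  have hpos2 : 0 < (1 - p) / (1 - b) := div_pos (by linarith) (by linarith)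
  have hex : Real.exp x = (p * (1 - b)) / (b * (1 - p)) := by
    rw [h1, Real.exp_sub, Real.exp_log hpos1, Real.exp_log hpos2]
    field_simp
  have hpb : p - b ≠ 0 := by
    intro h
    apply hx
    have hpb' : p = b := by linarith
    rw [h1, hpb', div_self hb0', div_self hb1']
    simp
  have hE1 : Real.exp x - 1 ≠ 0 := by
    rw [hex, div_sub_one (by positivity)]
    refine div_ne_zero ?_ (by positivity)
    intro h
    apply hpb
    nlinarith
  have h1E : (1:ℝ) - Real.exp x ≠ 0 := fun h => hE1 (by linarith)
  have hne : p * (1 - b) - b * (1 - p) ≠ 0 := by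
    intro h; exact hpb (by linarith)
  constructor
  · rw [hex, h2]
    rw [div_sub_one (by positivity), div_pow]
    field_simp
    ring
  · have hbp : b - p ≠ 0 := fun h => hpb (by linarith)
    have e1 : 1 - Real.exp x = (b - p) / (b * (1 - p)) := by
      rw [hex]; field_simp; ring
    have e2 : y = (b - p) / ((1 - b) * b) := by
      rw [h2]; field_simp; ring
    rw [e1, e2, one_div_div, one_div_div, div_sub_div_same, eq_comm,
      div_eq_iff hbp]
    ring
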